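/- arXiv:2507.03439 — 2 statements merged into one kernel-verified Lean document; each statement's English description precedes it below -/
import Mathlib

section
/- Fix n ∈ ℕ and let L = {a, b}* · {a} · {a, b}ⁿ · {c} · {a, b}ⁿ · {a} · {a, b}* over the three-letter alphabet {a, b, c}. Then every DFA whose language is {a, b, c}* ∖ L has at least 2^{n+1} states. -/
/-!
Fooling-set argument. For `g ∈ {a, b}ⁿ⁺¹` the word `g · bⁱ c bⁿ a` lies in `L` iff `gᵢ = a`:
the single `c` pins both `a`s of the pattern, one at position `i` of `g`. Hence distinct `g`
have distinct left quotients of `{a, b, c}* ∖ L`, and every such quotient contains `c`. In a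
partial DFA each word reaches at most one state, and a word with a nonempty left quotient
reaches exactly one; words with distinct quotients reach distinct states, so there are at
least `2ⁿ⁺¹` of them.
-/

-- The letters `a`, `b`, `c` are `0`, `1`, `2 : Fin 3`.
def abStar : Language (Fin 3) := {w | ∀ x ∈ w, x ≠ 2}

def abLen (n : ℕ) : Language (Fin 3) := {w | w.length = n ∧ ∀ x ∈ w, x ≠ 2}

def IsPartialDFA {α σ : Type*} (M : NFA α σ) : Prop :=
  (∃ q, M.start = {q}) ∧ ∀ q a, (M.step q a).Subsingleton

theorem List.getElem?_eq_some_iff_exists_append {α : Type*} {l : List α} {n : ℕ} {a : α} :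
    l[n]? = some a ↔ ∃ x y, l = x ++ a :: y ∧ x.length = n := by
  constructor
  · rw [List.getElem?_eq_some_iff]
    rintro ⟨hn, rfl⟩
    exact ⟨l.take n, l.drop (n + 1), by rw [List.getElem_cons_drop, List.take_append_drop],
      List.length_take_of_le hn.le⟩
  · rintro ⟨x, y, rfl, rfl⟩
    simp

theorem List.getElem?_reverse_eq_some_iff_exists_append {α : Type*} {l : List α} {n : ℕ}
    {a : α} : l.reverse[n]? = some a ↔ ∃ x y, l = x ++ a :: y ∧ y.length = n := by
  rw [List.getElem?_eq_some_iff_exists_append]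
  constructor
  · rintro ⟨x, y, h, rfl⟩
    exact ⟨y.reverse, x.reverse, by rw [← List.reverse_reverse l, h]; simp, List.length_reverse⟩
  · rintro ⟨x, y, rfl, rfl⟩
    exact ⟨y.reverse, x.reverse, by simp, List.length_reverse⟩

namespace NFA

variable {α σ : Type*} (M : NFA α σ)

theorem leftQuotient_accepts_apply (x : List α) :
    M.accepts.leftQuotient x = M.acceptsFrom (M.eval x) := by
  ext y
  exact M.append_mem_acceptsFrom

theorem nonempty_eval_of_append_mem_accepts {x y : List α} (h : x ++ y ∈ M.accepts) :
    (M.eval x).Nonempty := by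
  obtain ⟨_, -, hs⟩ := M.append_mem_acceptsFrom.mp h
  obtain ⟨t, ht, -⟩ := M.mem_evalFrom_iff_exists.mp hs
  exact ⟨t, ht⟩

theorem evalFrom_subsingleton (hstep : ∀ q a, (M.step q a).Subsingleton) {S : Set σ}
    (hS : S.Subsingleton) (x : List α) : (M.evalFrom S x).Subsingleton := by
  induction x generalizing S with
  | nil => exact hS
  | cons a x ih =>
    rw [evalFrom_cons]
    apply ih
    obtain rfl | ⟨s, rfl⟩ := hS.eq_empty_or_singleton
    · simp [stepSet_empty]
    · simpa [stepSet_singleton] using hstep s a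

theorem eval_subsingleton (hM : IsPartialDFA M) (x : List α) : (M.eval x).Subsingleton := by
  obtain ⟨s, hs⟩ := hM.1
  exact M.evalFrom_subsingleton hM.2 (by simp [hs]) x

theorem card_le_of_injective_leftQuotient [Fintype σ] {ι : Type*} [Fintype ι]
    (hM : IsPartialDFA M) (w : ι → List α) (hw : ∀ i, ∃ y, w i ++ y ∈ M.accepts)
    (hinj : Function.Injective fun i => M.accepts.leftQuotient (w i)) :
    Fintype.card ι ≤ Fintype.card σ := by
  choose q hq using fun i => M.nonempty_eval_of_append_mem_accepts (hw i).choose_spec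
  refine Fintype.card_le_of_injective q fun i j hij => hinj ?_
  have heval : M.eval (w i) = M.eval (w j) := by
    rw [(M.eval_subsingleton hM _).eq_singleton_of_mem (hq i),
      (M.eval_subsingleton hM _).eq_singleton_of_mem (hq j), hij]
  simp only [leftQuotient_accepts_apply, heval]

end NFA

theorem mem_abStar {w : List (Fin 3)} : w ∈ abStar ↔ 2 ∉ w :=
  ⟨fun h h2 => h 2 h2 rfl, fun h _ hx hx2 => h (hx2 ▸ hx)⟩

def gateLanguage (n : ℕ) : Language (Fin 3) :=
  abStar * {[0]} * abLen n * {[2]} * abLen n * {[0]} * abStar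

theorem mem_gateLanguage {n : ℕ} {w : List (Fin 3)} :
    w ∈ gateLanguage n ↔ ∃ p ∈ abStar, ∃ x ∈ abLen n, ∃ y ∈ abLen n, ∃ s ∈ abStar,
      w = p ++ 0 :: x ++ 2 :: (y ++ 0 :: s) := by
  simp only [gateLanguage, Language.mem_mul]
  constructor
  · rintro ⟨_, ⟨_, ⟨_, ⟨_, ⟨_, ⟨p, hp, _, rfl, rfl⟩, x, hx, rfl⟩, _, rfl, rfl⟩, y, hy, rfl⟩,
      _, rfl, rfl⟩, s, hs, rfl⟩
    exact ⟨p, hp, x, hx, y, hy, s, hs, by simp⟩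
  · rintro ⟨p, hp, x, hx, y, hy, s, hs, rfl⟩
    exact ⟨_, ⟨_, ⟨_, ⟨_, ⟨_, ⟨p, hp, _, rfl, rfl⟩, x, hx, rfl⟩, _, rfl, rfl⟩, y, hy, rfl⟩,
      _, rfl, rfl⟩, s, hs, by simp⟩

theorem append_cons_two_mem_gateLanguage_iff {n : ℕ} {u v : List (Fin 3)} (hu : u ∈ abStar)
    (hv : v ∈ abStar) :
    u ++ 2 :: v ∈ gateLanguage n ↔ u.reverse[n]? = some 0 ∧ v[n]? = some 0 := by
  rw [mem_gateLanguage, List.getElem?_reverse_eq_some_iff_exists_append,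
    List.getElem?_eq_some_iff_exists_append]
  constructor
  · rintro ⟨p, -, x, hx, y, hy, s, -, h⟩
    obtain ⟨rfl, -, rfl⟩ :=
      (List.append_cons_inj_of_notMem (mem_abStar.mp hu) (mem_abStar.mp hv)).mp h
    exact ⟨⟨p, x, rfl, hx.1⟩, ⟨y, s, rfl, hy.1⟩⟩
  · rintro ⟨⟨p, x, rfl, hx⟩, ⟨y, s, rfl, hy⟩⟩
    refine ⟨p, ?_, x, ⟨hx, ?_⟩, y, ⟨hy, ?_⟩, s, ?_, rfl⟩ <;> intro a ha
    exacts [hu a (by simp [ha]), hu a (by simp [ha]), hv a (by simp [ha]), hv a (by simp [ha])]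

def abWord {m : ℕ} (g : Fin m → Bool) : List (Fin 3) :=
  List.ofFn fun j => bif g j then 0 else 1

def gateProbe (n i : ℕ) : List (Fin 3) :=
  List.replicate i 1 ++ 2 :: (List.replicate n 1 ++ [0])

theorem abWord_mem_abStar {m : ℕ} (g : Fin m → Bool) : abWord g ∈ abStar := by
  simp only [mem_abStar, abWord, List.mem_ofFn, not_exists]
  intro j
  cases g j <;> decide

theorem abWord_append_gateProbe_mem_gateLanguage_iff {n : ℕ} (g : Fin (n + 1) → Bool)
    (i : Fin (n + 1)) : abWord g ++ gateProbe n i ∈ gateLanguage n ↔ g i = true := by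
  have hi := i.isLt
  have hu : abWord g ++ List.replicate i 1 ∈ abStar := by
    have := abWord_mem_abStar g
    simp_all [mem_abStar, List.mem_replicate]
  have hv : List.replicate n 1 ++ [0] ∈ abStar := by
    simp [mem_abStar, List.mem_replicate]
  rw [gateProbe, ← List.append_assoc, append_cons_two_mem_gateLanguage_iff hu hv,
    List.getElem?_reverse]
  · have hindex : (abWord g ++ List.replicate i 1).length - 1 - n = i := by
      simp only [abWord, List.length_append, List.length_ofFn, List.length_replicate]
      omega
    rw [hindex, List.getElem?_append_left (by simpa [abWord] using hi), abWord,
      List.getElem?_ofFn]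
    simp only [hi, dite_true, Fin.eta, Option.some.injEq]
    cases g i <;> simp
  · simp [abWord]

theorem abWord_append_two_notMem_gateLanguage {n : ℕ} (g : Fin (n + 1) → Bool) :
    abWord g ++ [2] ∉ gateLanguage n := by
  rw [append_cons_two_mem_gateLanguage_iff (abWord_mem_abStar g) (mem_abStar.mpr List.not_mem_nil)]
  simp

theorem injective_leftQuotient_compl_gateLanguage (n : ℕ) :
    Function.Injective fun g : Fin (n + 1) → Bool =>
      (gateLanguage n)ᶜ.leftQuotient (abWord g) := by
  intro g h hgh
  funext i
  have hprobe : ¬abWord g ++ gateProbe n i ∈ gateLanguage n ↔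
      ¬abWord h ++ gateProbe n i ∈ gateLanguage n :=
    Iff.of_eq (congrArg (gateProbe n i ∈ ·) hgh)
  rw [not_iff_not, abWord_append_gateProbe_mem_gateLanguage_iff,
    abWord_append_gateProbe_mem_gateLanguage_iff] at hprobe
  exact Bool.eq_iff_iff.mpr hprobe

/-- The exponential blow-up claim of Section 4.2: every DFA for the complement
of `L = {a, b}* · {a} · {a, b}ⁿ · {c} · {a, b}ⁿ · {a} · {a, b}*` (over the
three-letter alphabet `{a, b, c}`, modeled by `Fin 3` with `a = 0`, `b = 1`,
`c = 2`) has at least `2^(n+1)` states. -/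
theorem dfa_complement_gate_family_lower_bound (n : ℕ) :
    ∀ (σ : Type) [Fintype σ] (M : NFA (Fin 3) σ), IsPartialDFA M →
      M.accepts = (abStar * {[0]} * abLen n * {[2]} * abLen n * {[0]} * abStar)ᶜ →
      2 ^ (n + 1) ≤ Fintype.card σ := by
  intro σ _ M hM hacc
  change M.accepts = (gateLanguage n)ᶜ at hacc
  have := M.card_le_of_injective_leftQuotient hM abWord
    (fun g => ⟨[2], by rw [hacc]; exact abWord_append_two_notMem_gateLanguage g⟩)
    (by rw [hacc]; exact injective_leftQuotient_compl_gateLanguage n)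
  simpa using this
end

section
/- Let Σ be a finite alphabet and Γ ⊆ Σ a set of gate symbols. For every c ∈ Γ let U_c ⊆ (Σ ∖ Γ)* and V_c ⊆ Σ* be languages, and set L = ⋃_{c∈Γ} U_c · {c} · V_c. Then Σ* ∖ L = (Σ ∖ Γ)* ∪ ⋃_{c∈Γ} ( ((Σ ∖ Γ)* ∖ U_c) · {c} · Σ* ∪ (Σ ∖ Γ)* · {c} · (Σ* ∖ V_c) ). -/
/-- The language of words over `α` containing no occurrence of any symbol of
`Γ`, i.e. `(Σ ∖ Γ)*`. -/
def noGateSym {α : Type*} (Γ : Set α) : Language α := {w | ∀ x ∈ w, x ∉ Γ}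

/-!
A word containing a gate symbol splits uniquely at its first gate symbol as `u ++ c :: v` with `u`
gate-free. Because every front `U c` is gate-free, any decomposition `u' ++ c' :: v'` with
`u' ∈ U c'` is this one, so the word lies in `⋃ U_c · {c} · V_c` iff `u ∈ U c ∧ v ∈ V c`; the same
holds for the two unions on the right, whose fronts are gate-free too, and the identity reduces
to `¬(p ∧ q) ↔ ¬p ∨ ¬q`.
-/

open List

namespace Language

variable {α : Type*}

theorem mem_mul_singleton_mul {l m : Language α} {a : α} {w : List α} :
    w ∈ l * {[a]} * m ↔ ∃ u ∈ l, ∃ v ∈ m, u ++ a :: v = w := by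
  constructor
  · rintro ⟨_, ⟨u, hu, _, rfl, rfl⟩, v, hv, rfl⟩
    exact ⟨u, hu, v, hv, by simp⟩
  · rintro ⟨u, hu, v, hv, rfl⟩
    exact ⟨u ++ [a], ⟨u, hu, [a], rfl, rfl⟩, v, hv, by simp⟩

theorem mem_sup {l m : Language α} {w : List α} : w ∈ l ⊔ m ↔ w ∈ l ∨ w ∈ m := Iff.rfl

theorem mem_sdiff {l m : Language α} {w : List α} : w ∈ l \ m ↔ w ∈ l ∧ w ∉ m := Iff.rfl

theorem mem_compl {l : Language α} {w : List α} : w ∈ lᶜ ↔ w ∉ l := Iff.rfl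

theorem mem_top (w : List α) : w ∈ (⊤ : Language α) := trivial

end Language

section noGateSym

variable {α : Type*} {Γ : Set α}

theorem append_cons_notMem_noGateSym {u v : List α} {c : α} (hc : c ∈ Γ) :
    u ++ c :: v ∉ noGateSym Γ :=
  fun h => h c (by simp) hc

theorem exists_append_cons_of_notMem_noGateSym {w : List α} (hw : w ∉ noGateSym Γ) :
    ∃ u ∈ noGateSym Γ, ∃ c ∈ Γ, ∃ v, u ++ c :: v = w := by
  classical
  cases hfind : w.find? (· ∈ Γ) with
  | none => exact absurd (fun x hx => by simpa using find?_eq_none.mp hfind x hx) hw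
  | some c =>
    obtain ⟨hc, u, v, rfl, hu⟩ := find?_eq_some_iff_append.mp hfind
    exact ⟨u, fun x hx => by simpa using hu x hx, c, by simpa using hc, v, rfl⟩

theorem takeWhile_append_cons_of_mem_noGateSym [DecidablePred (· ∈ Γ)] {u v : List α} {c : α}
    (hu : u ∈ noGateSym Γ) (hc : c ∈ Γ) : (u ++ c :: v).takeWhile (· ∉ Γ) = u := by
  rw [takeWhile_append_of_pos fun x hx => by simpa using hu x hx, takeWhile_cons_of_neg (by simpa using hc),
    append_nil]

theorem append_cons_inj_of_mem_noGateSym {u u' v v' : List α} {c c' : α}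
    (hu : u ∈ noGateSym Γ) (hu' : u' ∈ noGateSym Γ) (hc : c ∈ Γ) (hc' : c' ∈ Γ)
    (h : u ++ c :: v = u' ++ c' :: v') : u = u' ∧ c = c' ∧ v = v' := by
  classical
  obtain rfl : u = u' := by
    rw [← takeWhile_append_cons_of_mem_noGateSym (v := v) hu hc, h,
      takeWhile_append_cons_of_mem_noGateSym hu' hc']
  simpa using h

theorem notMem_biSup_of_mem_noGateSym {A B : α → Language α} {w : List α}
    (hw : w ∈ noGateSym Γ) : w ∉ ⨆ c ∈ Γ, A c * {[c]} * B c := by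
  simp only [Language.mem_iSup, Language.mem_mul_singleton_mul]
  rintro ⟨c, hc, u, -, v, -, rfl⟩
  exact append_cons_notMem_noGateSym hc hw

theorem append_cons_mem_biSup_iff {A B : α → Language α} {u v : List α} {c : α}
    (hA : ∀ d ∈ Γ, A d ≤ noGateSym Γ) (hu : u ∈ noGateSym Γ) (hc : c ∈ Γ) :
    u ++ c :: v ∈ ⨆ d ∈ Γ, A d * {[d]} * B d ↔ u ∈ A c ∧ v ∈ B c := by
  simp only [Language.mem_iSup, Language.mem_mul_singleton_mul]
  constructor
  · rintro ⟨d, hd, u', hu', v', hv', h⟩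
    obtain ⟨rfl, rfl, rfl⟩ := append_cons_inj_of_mem_noGateSym (hA d hd hu') hu hd hc h
    exact ⟨hu', hv'⟩
  · rintro ⟨hu', hv'⟩
    exact ⟨c, hc, u, hu', v, hv', rfl⟩

end noGateSym

theorem gate_equal_language_identity_general {α : Type*} (Γ : Set α)
    (U V : α → Language α) (hU : ∀ c ∈ Γ, U c ≤ noGateSym Γ) :
    (⨆ c ∈ Γ, U c * {[c]} * V c)ᶜ =
      noGateSym Γ ⊔
        ⨆ c ∈ Γ, ((noGateSym Γ \ U c) * {[c]} * ⊤ ⊔ noGateSym Γ * {[c]} * (V c)ᶜ) := by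
  simp only [iSup_sup_eq]
  ext w
  by_cases hw : w ∈ noGateSym Γ
  · exact iff_of_true (notMem_biSup_of_mem_noGateSym hw) (Or.inl hw)
  obtain ⟨u, hu, c, hc, v, rfl⟩ := exists_append_cons_of_notMem_noGateSym hw
  simp only [Language.mem_compl, Language.mem_sup, Language.mem_sdiff, Language.mem_top,
    append_cons_mem_biSup_iff hU hu hc, append_cons_mem_biSup_iff (fun _ _ => sdiff_le) hu hc,
    append_cons_mem_biSup_iff (fun _ _ => le_rfl) hu hc, hw, hu, true_and, and_true, false_or]
  exact not_and_or

/-- Language-level correctness of generalized gate complementation for equal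
gate NFAs (Theorem `gate-equal`): if for every gate symbol `c ∈ Γ` the front
language `U c` contains no gate symbols, then the complement of
`⋃_{c∈Γ} U_c · {c} · V_c` has the stated three-part shape. -/
theorem gate_equal_language_identity {α : Type*} [Fintype α] (Γ : Set α)
    (U V : α → Language α) (hU : ∀ c ∈ Γ, U c ≤ noGateSym Γ) :
    (⨆ c ∈ Γ, U c * {[c]} * V c)ᶜ =
      noGateSym Γ ⊔
        ⨆ c ∈ Γ, ((noGateSym Γ \ U c) * {[c]} * ⊤ ⊔ noGateSym Γ * {[c]} * (V c)ᶜ) :=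
  gate_equal_language_identity_general Γ U V hU
end
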